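/- Suppose T is a normal subgroup of G contained in the commutator subgroup [G,G], and π : Γ → G is a surjective homomorphism. Then for every normal subgroup N of G with N ⊆ T and a(N) = a(T), and every homomorphism φ : Γ → G with φ(x)N = π(x)N for all x ∈ Γ, one has b(N,φ,χ) ≤ b(T,π,χ); in particular the maximum of b(N,φ,χ) over all such pairs (N,φ) equals b(T,π,χ). -/

import Mathlib

/-- The index `ind(g) = n − #{orbits of ⟨ρ(g)⟩ on {1,…,n}}` of a group element under a
permutation representation `ρ : G → Sym({1,…,n})`. -/
noncomputable def permIndex {n : ℕ} {G : Type*} [Group G] (ρ : G →* Equiv.Perm (Fin n))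
    (g : G) : ℕ :=
  n - Nat.card (MulAction.orbitRel.Quotient (Subgroup.zpowers (ρ g)) (Fin n))

/-- `a(H) = min{ind(h) : h ∈ H, h ≠ 1}`. -/
noncomputable def aInv {n : ℕ} {G : Type*} [Group G] (ρ : G →* Equiv.Perm (Fin n))
    (H : Set G) : ℕ :=
  sInf {k | ∃ h ∈ H, h ≠ 1 ∧ permIndex ρ h = k}

/-- `A(H) = {h ∈ H : h ≠ 1 and ind(h) = a(H)}`. -/
noncomputable def ASet {n : ℕ} {G : Type*} [Group G] (ρ : G →* Equiv.Perm (Fin n))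
    (H : Set G) : Set G :=
  {h | h ∈ H ∧ h ≠ 1 ∧ permIndex ρ h = aInv ρ H}

/-- The `M`-conjugacy class of an element `c`. -/
def mConjClass {G : Type*} [Group G] (M : Subgroup G) (c : G) : Set G :=
  {g | ∃ t ∈ M, g = t * c * t⁻¹}

/-- The set of `M`-conjugacy classes contained in `A(M)`. -/
noncomputable def conjClassesIn {n : ℕ} {G : Type*} [Group G] (ρ : G →* Equiv.Perm (Fin n))
    (M : Subgroup G) : Set (Set G) :=
  {C | (∃ c ∈ M, C = mConjClass M c) ∧ C ⊆ ASet ρ (M : Set G)}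

/-- The twisted action `σ·C = {ψ(σ) c^{k(σ)} ψ(σ)⁻¹ : c ∈ C}`, where `k(σ)` represents
`χ(σ)⁻¹ ∈ (ℤ/mℤ)ˣ`. -/
def classAct {Γ G : Type*} [Group Γ] [Group G] {m : ℕ} (ψ : Γ →* G) (χ : Γ →* (ZMod m)ˣ)
    (σ : Γ) (C : Set G) : Set G :=
  {g | ∃ c ∈ C, g = ψ σ * c ^ (ZMod.val (((χ σ)⁻¹ : (ZMod m)ˣ) : ZMod m)) * (ψ σ)⁻¹}

/-- `b(M,ψ,χ)` : the number of orbits of the twisted action on the set of `M`-conjugacy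
classes contained in `A(M)`. -/
noncomputable def bInv {n : ℕ} {Γ G : Type*} [Group Γ] [Group G] {m : ℕ}
    (ρ : G →* Equiv.Perm (Fin n)) (M : Subgroup G) (ψ : Γ →* G) (χ : Γ →* (ZMod m)ˣ) : ℕ :=
  Nat.card {O : Set (Set G) |
    ∃ C ∈ conjClassesIn ρ M, O = {C' | ∃ σ : Γ, classAct ψ χ σ C = C'}}

/-!
An `N`-class `C ⊆ A(N)` has `T`-saturation a `T`-class in `A(T)`, because `a(N) = a(T)` and
conjugation preserves `ind`; since `φ ≡ π` modulo `N ≤ T`, saturation carries `φ`-orbits to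
`π`-orbits. It is injective on orbits: if two saturated classes lie in one `π`-orbit, they
differ by a twist and a `T`-conjugation, and every `t ∈ T ≤ [G,G]` lifts along the surjection `π`
to some `τ ∈ [Γ,Γ] ≤ ker χ`, whose twisted action through `φ` is conjugation by `t` modulo `N`.
So `b(N,φ,χ) ≤ b(T,π,χ)`, and `(T,π)` itself attains the bound.
-/

open MulAction

lemma Equiv.Perm.orbitRel_zpowers_iff_sameCycle {α : Type*} (σ : Equiv.Perm α) (x y : α) :
    orbitRel (Subgroup.zpowers σ) α x y ↔ σ.SameCycle y x := by
  simp only [orbitRel_apply, mem_orbit_iff, Subgroup.exists_zpowers, Equiv.Perm.SameCycle]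
  rfl

lemma Equiv.Perm.card_orbitRel_zpowers_conj {α : Type*} (σ τ : Equiv.Perm α) :
    Nat.card (orbitRel.Quotient (Subgroup.zpowers (τ * σ * τ⁻¹)) α) =
      Nat.card (orbitRel.Quotient (Subgroup.zpowers σ) α) :=
  Nat.card_congr <| Quotient.congr τ⁻¹ fun x y => by
    simp only [Equiv.Perm.orbitRel_zpowers_iff_sameCycle, Equiv.Perm.sameCycle_conj]

lemma permIndex_conj {n : ℕ} {G : Type*} [Group G] (ρ : G →* Equiv.Perm (Fin n)) (g c : G) :
    permIndex ρ (g * c * g⁻¹) = permIndex ρ c := by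
  rw [permIndex, map_mul, map_mul, map_inv, Equiv.Perm.card_orbitRel_zpowers_conj, permIndex]

section ConjClass

variable {G : Type*} [Group G] {M N T : Subgroup G}

lemma mem_mConjClass_self (M : Subgroup G) (c : G) : c ∈ mConjClass M c :=
  ⟨1, M.one_mem, by group⟩

lemma mConjClass_eq_of_mem {c d : G} (hd : d ∈ mConjClass M c) :
    mConjClass M d = mConjClass M c := by
  obtain ⟨u, hu, rfl⟩ := hd
  ext g
  constructor
  · rintro ⟨t, ht, rfl⟩
    exact ⟨t * u, M.mul_mem ht hu, by group⟩
  · rintro ⟨t, ht, rfl⟩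
    exact ⟨t * u⁻¹, M.mul_mem ht (M.inv_mem hu), by group⟩

lemma mConjClass_mono (hNT : N ≤ T) (c : G) : mConjClass N c ⊆ mConjClass T c :=
  fun _ ⟨t, ht, hg⟩ => ⟨t, hNT ht, hg⟩

lemma mConjClass_conj_eq_of_inv_mul_mem (hN : N.Normal) {a b : G} (hab : a⁻¹ * b ∈ N)
    (c : G) : mConjClass N (b * c * b⁻¹) = mConjClass N (a * c * a⁻¹) := by
  refine mConjClass_eq_of_mem ⟨b * a⁻¹, ?_, by group⟩
  simpa [mul_assoc] using hN.conj_mem _ hab a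

lemma mConjClass_subset_ASet {n : ℕ} {ρ : G →* Equiv.Perm (Fin n)} {c : G}
    (hc : c ∈ ASet ρ (M : Set G)) : mConjClass M c ⊆ ASet ρ (M : Set G) := by
  obtain ⟨hcM, hc1, hci⟩ := hc
  rintro _ ⟨t, ht, rfl⟩
  exact ⟨M.mul_mem (M.mul_mem ht hcM) (M.inv_mem ht), by rwa [Ne, conj_eq_one_iff],
    by rw [permIndex_conj, hci]⟩

lemma ASet_subset_of_le {n : ℕ} (ρ : G →* Equiv.Perm (Fin n)) (hNT : N ≤ T)
    (ha : aInv ρ (N : Set G) = aInv ρ (T : Set G)) :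
    ASet ρ (N : Set G) ⊆ ASet ρ (T : Set G) :=
  fun _ ⟨hN, h1, hi⟩ => ⟨hNT hN, h1, hi.trans ha⟩

lemma mConjClass_mem_conjClassesIn {n : ℕ} {ρ : G →* Equiv.Perm (Fin n)} {c : G}
    (hc : c ∈ ASet ρ (M : Set G)) : mConjClass M c ∈ conjClassesIn ρ M :=
  ⟨⟨c, hc.1, rfl⟩, mConjClass_subset_ASet hc⟩

def conjSaturation (T : Subgroup G) (C : Set G) : Set G :=
  ⋃ x ∈ C, mConjClass T x

lemma conjSaturation_mConjClass (hNT : N ≤ T) (c : G) :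
    conjSaturation T (mConjClass N c) = mConjClass T c := by
  refine subset_antisymm (Set.iUnion₂_subset fun x hx => ?_)
    (Set.subset_biUnion_of_mem (mem_mConjClass_self N c))
  exact (mConjClass_eq_of_mem (mConjClass_mono hNT c hx)).subset

end ConjClass

section Twist

variable {Γ G : Type*} [Group Γ] [Group G] {m : ℕ}

lemma pow_mod_of_exponent_dvd (hm : Monoid.exponent G ∣ m) (c : G) (k : ℕ) :
    c ^ (k % m) = c ^ k :=
  pow_eq_pow_iff_modEq.mpr ((Nat.mod_modEq k m).of_dvd ((Monoid.order_dvd_exponent c).trans hm))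

def twist (ψ : Γ →* G) (χ : Γ →* (ZMod m)ˣ) (σ : Γ) (c : G) : G :=
  ψ σ * c ^ (ZMod.val (((χ σ)⁻¹ : (ZMod m)ˣ) : ZMod m)) * (ψ σ)⁻¹

variable (ψ : Γ →* G) (χ : Γ →* (ZMod m)ˣ)

lemma classAct_eq_image (σ : Γ) (C : Set G) : classAct ψ χ σ C = twist ψ χ σ '' C := by
  ext g
  simp only [classAct, twist, Set.mem_image, Set.mem_ofPred_eq, eq_comm]

lemma twist_of_map_eq_one (hm : Monoid.exponent G ∣ m) {τ : Γ} (hτ : χ τ = 1) (c : G) :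
    twist ψ χ τ c = ψ τ * c * (ψ τ)⁻¹ := by
  rw [twist, hτ, inv_one, Units.val_one, ZMod.val_one_eq_one_mod, pow_mod_of_exponent_dvd hm,
    pow_one]

lemma twist_mul (hm : Monoid.exponent G ∣ m) (σ τ : Γ) :
    twist ψ χ (σ * τ) = twist ψ χ σ ∘ twist ψ χ τ := by
  funext c
  simp only [twist, Function.comp_apply, conj_pow, map_mul, mul_inv_rev, Units.val_mul,
    ZMod.val_mul, pow_mod_of_exponent_dvd hm, ← pow_mul]
  group

lemma twist_conj (σ : Γ) (t c : G) :
    twist ψ χ σ (t * c * t⁻¹) =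
      (ψ σ * t * (ψ σ)⁻¹) * twist ψ χ σ c * (ψ σ * t * (ψ σ)⁻¹)⁻¹ := by
  simp only [twist, conj_pow]
  group

lemma classAct_mConjClass {N : Subgroup G} (hN : N.Normal) (σ : Γ) (c : G) :
    classAct ψ χ σ (mConjClass N c) = mConjClass N (twist ψ χ σ c) := by
  rw [classAct_eq_image]
  ext g
  constructor
  · rintro ⟨_, ⟨t, ht, rfl⟩, rfl⟩
    exact ⟨_, hN.conj_mem t ht (ψ σ), twist_conj ψ χ σ t c⟩
  · rintro ⟨t, ht, rfl⟩
    refine ⟨(ψ σ)⁻¹ * t * ψ σ * c * ((ψ σ)⁻¹ * t * ψ σ)⁻¹,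
      ⟨_, by simpa using hN.conj_mem t ht (ψ σ)⁻¹, by group⟩, ?_⟩
    rw [twist_conj]
    group

def classOrbit (C : Set G) : Set (Set G) :=
  Set.range fun σ => classAct ψ χ σ C

variable {ψ χ}

lemma classAct_one (hm : Monoid.exponent G ∣ m) (C : Set G) : classAct ψ χ 1 C = C := by
  ext g
  simp [classAct_eq_image, twist_of_map_eq_one ψ χ hm (map_one χ)]

lemma classAct_mul (hm : Monoid.exponent G ∣ m) (σ τ : Γ) (C : Set G) :
    classAct ψ χ (σ * τ) C = classAct ψ χ σ (classAct ψ χ τ C) := by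
  simp only [classAct_eq_image, twist_mul ψ χ hm, Set.image_comp]

lemma mem_classOrbit {C D : Set G} : D ∈ classOrbit ψ χ C ↔ ∃ σ, classAct ψ χ σ C = D :=
  Iff.rfl

lemma mem_classOrbit_self (hm : Monoid.exponent G ∣ m) (C : Set G) : C ∈ classOrbit ψ χ C :=
  ⟨1, classAct_one hm C⟩

lemma classOrbit_eq_of_mem (hm : Monoid.exponent G ∣ m) {C D : Set G}
    (hD : D ∈ classOrbit ψ χ C) : classOrbit ψ χ D = classOrbit ψ χ C := by
  obtain ⟨σ, rfl⟩ := hD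
  ext E
  constructor
  · rintro ⟨μ, rfl⟩
    exact ⟨μ * σ, classAct_mul hm μ σ C⟩
  · rintro ⟨μ, rfl⟩
    exact ⟨μ * σ⁻¹, by dsimp only; rw [← classAct_mul hm, inv_mul_cancel_right]⟩

end Twist

lemma exists_eq_and_map_eq_one_of_mem_commutator {Γ G A : Type*} [Group Γ] [Group G]
    [CommGroup A] {π : Γ →* G} (hπ : Function.Surjective π) (f : Γ →* A) {t : G}
    (ht : t ∈ commutator G) : ∃ τ, π τ = t ∧ f τ = 1 := by
  have hmap : (commutator Γ).map π = commutator G := by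
    rw [commutator_def, commutator_def, Subgroup.map_commutator,
      Subgroup.map_top_of_surjective π hπ]
  obtain ⟨τ, hτ, rfl⟩ := Subgroup.mem_map.mp (hmap ▸ ht)
  exact ⟨τ, rfl, Abelianization.commutator_subset_ker f hτ⟩

section Orbits

variable {n : ℕ} {Γ G : Type*} [Group Γ] [Group G] {m : ℕ} {χ : Γ →* (ZMod m)ˣ}
  {N T : Subgroup G} {φ π : Γ →* G}

lemma bInv_eq_ncard (ρ : G →* Equiv.Perm (Fin n)) (M : Subgroup G) (ψ : Γ →* G) :
    bInv ρ M ψ χ = (classOrbit ψ χ '' conjClassesIn ρ M).ncard := by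
  rw [bInv, ← Nat.card_coe_set_eq]
  congr 2
  exact Set.ext fun O => exists_congr fun C => and_congr_right fun _ => eq_comm

lemma conjSaturation_classAct (hT : T.Normal) (hN : N.Normal) (hNT : N ≤ T)
    (hφ : ∀ x, (π x)⁻¹ * φ x ∈ N) (σ : Γ) (c : G) :
    conjSaturation T (classAct φ χ σ (mConjClass N c)) = classAct π χ σ (mConjClass T c) := by
  rw [classAct_mConjClass φ χ hN, classAct_mConjClass π χ hT, conjSaturation_mConjClass hNT,
    twist, twist]
  exact mConjClass_conj_eq_of_inv_mul_mem hT (hNT (hφ σ)) _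

lemma image_conjSaturation_classOrbit (hT : T.Normal) (hN : N.Normal) (hNT : N ≤ T)
    (hφ : ∀ x, (π x)⁻¹ * φ x ∈ N) (c : G) :
    conjSaturation T '' classOrbit φ χ (mConjClass N c) = classOrbit π χ (mConjClass T c) := by
  rw [classOrbit, ← Set.range_comp']
  exact congrArg Set.range (funext fun σ => conjSaturation_classAct hT hN hNT hφ σ c)

lemma mConjClass_conj_mem_classOrbit (hm : Monoid.exponent G ∣ m) (hN : N.Normal)
    (hcomm : T ≤ commutator G) (hπ : Function.Surjective π) (hφ : ∀ x, (π x)⁻¹ * φ x ∈ N)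
    {t : G} (ht : t ∈ T) (c : G) :
    mConjClass N (t * c * t⁻¹) ∈ classOrbit φ χ (mConjClass N c) := by
  obtain ⟨τ, rfl, hτ⟩ := exists_eq_and_map_eq_one_of_mem_commutator hπ χ (hcomm ht)
  refine mem_classOrbit.mpr ⟨τ, ?_⟩
  rw [classAct_mConjClass φ χ hN, twist_of_map_eq_one φ χ hm hτ]
  exact mConjClass_conj_eq_of_inv_mul_mem hN (hφ τ) c

lemma classOrbit_mConjClass_eq_of_saturation_eq (hm : Monoid.exponent G ∣ m) (hT : T.Normal)
    (hN : N.Normal) (hNT : N ≤ T) (hcomm : T ≤ commutator G) (hπ : Function.Surjective π)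
    (hφ : ∀ x, (π x)⁻¹ * φ x ∈ N) {c₁ c₂ : G}
    (h : classOrbit π χ (mConjClass T c₁) = classOrbit π χ (mConjClass T c₂)) :
    classOrbit φ χ (mConjClass N c₁) = classOrbit φ χ (mConjClass N c₂) := by
  obtain ⟨σ, hσ⟩ := mem_classOrbit.mp (h ▸ mem_classOrbit_self hm (mConjClass T c₁))
  have hd : classAct φ χ σ (mConjClass N c₂) = mConjClass N (twist φ χ σ c₂) :=
    classAct_mConjClass φ χ hN σ c₂
  have hc₁ : c₁ ∈ mConjClass T (twist φ χ σ c₂) := by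
    rw [← conjSaturation_mConjClass hNT, ← hd, conjSaturation_classAct hT hN hNT hφ, hσ]
    exact mem_mConjClass_self T c₁
  obtain ⟨t, ht, rfl⟩ := hc₁
  rw [classOrbit_eq_of_mem hm (mConjClass_conj_mem_classOrbit hm hN hcomm hπ hφ ht _),
    classOrbit_eq_of_mem hm ⟨σ, hd⟩]

theorem bInv_le_bInv [Finite G] (ρ : G →* Equiv.Perm (Fin n)) (hm : Monoid.exponent G ∣ m)
    (hT : T.Normal) (hN : N.Normal) (hNT : N ≤ T) (hcomm : T ≤ commutator G)
    (ha : aInv ρ (N : Set G) = aInv ρ (T : Set G)) (hπ : Function.Surjective π)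
    (hφ : ∀ x, (π x)⁻¹ * φ x ∈ N) :
    bInv ρ N φ χ ≤ bInv ρ T π χ := by
  rw [bInv_eq_ncard, bInv_eq_ncard]
  refine Set.ncard_le_ncard_of_injOn (Set.image (conjSaturation T)) ?_ ?_
  · rintro _ ⟨C, ⟨⟨c, -, rfl⟩, hCA⟩, rfl⟩
    rw [image_conjSaturation_classOrbit hT hN hNT hφ]
    exact Set.mem_image_of_mem _ <| mConjClass_mem_conjClassesIn <|
      ASet_subset_of_le ρ hNT ha (hCA (mem_mConjClass_self N c))
  · rintro _ ⟨_, ⟨⟨c₁, -, rfl⟩, -⟩, rfl⟩ _ ⟨_, ⟨⟨c₂, -, rfl⟩, -⟩, rfl⟩ h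
    rw [image_conjSaturation_classOrbit hT hN hNT hφ,
      image_conjSaturation_classOrbit hT hN hNT hφ] at h
    exact classOrbit_mConjClass_eq_of_saturation_eq hm hT hN hNT hcomm hπ hφ h

end Orbits

theorem statement7_general {n : ℕ} {G : Type*} [Group G] [Finite G]
    (ρ : G →* Equiv.Perm (Fin n))
    {Γ : Type*} [Group Γ] {m : ℕ} (hm : Monoid.exponent G ∣ m) (χ : Γ →* (ZMod m)ˣ)
    (T : Subgroup G) (hTnormal : T.Normal) (hcomm : T ≤ commutator G)
    (π : Γ →* G) (hπ : Function.Surjective π) :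
    (∀ N : Subgroup G, N.Normal → N ≤ T → aInv ρ (N : Set G) = aInv ρ (T : Set G) →
      ∀ φ : Γ →* G, (∀ x, (π x)⁻¹ * φ x ∈ N) → bInv ρ N φ χ ≤ bInv ρ T π χ) ∧
    IsGreatest {k | ∃ N : Subgroup G, N.Normal ∧ N ≤ T ∧
        aInv ρ (N : Set G) = aInv ρ (T : Set G) ∧
        ∃ φ : Γ →* G, (∀ x, (π x)⁻¹ * φ x ∈ N) ∧ bInv ρ N φ χ = k}
      (bInv ρ T π χ) := by
  have hle : ∀ N : Subgroup G, N.Normal → N ≤ T → aInv ρ (N : Set G) = aInv ρ (T : Set G) →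
      ∀ φ : Γ →* G, (∀ x, (π x)⁻¹ * φ x ∈ N) → bInv ρ N φ χ ≤ bInv ρ T π χ :=
    fun N hN hNT ha φ hφ => bInv_le_bInv ρ hm hTnormal hN hNT hcomm ha hπ hφ
  refine ⟨hle, ⟨T, hTnormal, le_rfl, rfl, π, fun x => ?_, rfl⟩, ?_⟩
  · rw [inv_mul_cancel]
    exact T.one_mem
  · rintro _ ⟨N, hN, hNT, ha, φ, hφ, rfl⟩
    exact hle N hN hNT ha φ hφ

/-- Let `G` be a finite group with an injective homomorphism
`ρ : G → Sym({1,…,n})` with transitive image, `Γ` a group, `χ : Γ → (ℤ/mℤ)ˣ` a homomorphism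
with `m` a multiple of the exponent of `G`.  Suppose `T ⊴ G` is contained in the commutator
subgroup `[G,G]`, and `π : Γ → G` is surjective.  Then for every normal `N ⊴ G` with `N ⊆ T`
and `a(N) = a(T)` and every homomorphism `φ : Γ → G` with `φ(x)N = π(x)N` for all `x`, one has
`b(N,φ,χ) ≤ b(T,π,χ)`; in particular the maximum of `b(N,φ,χ)` over all such pairs `(N,φ)`
equals `b(T,π,χ)`. -/
theorem statement7 {n : ℕ} {G : Type*} [Group G] [Finite G]
    (ρ : G →* Equiv.Perm (Fin n)) (hρ : Function.Injective ρ)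
    (htrans : ∀ a b : Fin n, ∃ g : G, ρ g a = b)
    {Γ : Type*} [Group Γ] {m : ℕ} (hm : Monoid.exponent G ∣ m) (χ : Γ →* (ZMod m)ˣ)
    (T : Subgroup G) (hTnormal : T.Normal) (hcomm : T ≤ commutator G)
    (π : Γ →* G) (hπ : Function.Surjective π) :
    (∀ N : Subgroup G, N.Normal → N ≤ T → aInv ρ (N : Set G) = aInv ρ (T : Set G) →
      ∀ φ : Γ →* G, (∀ x, (π x)⁻¹ * φ x ∈ N) → bInv ρ N φ χ ≤ bInv ρ T π χ) ∧
    IsGreatest {k | ∃ N : Subgroup G, N.Normal ∧ N ≤ T ∧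
        aInv ρ (N : Set G) = aInv ρ (T : Set G) ∧
        ∃ φ : Γ →* G, (∀ x, (π x)⁻¹ * φ x ∈ N) ∧ bInv ρ N φ χ = k}
      (bInv ρ T π χ) :=
  statement7_general ρ hm χ T hTnormal hcomm π hπ
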